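/- Let k be an algebraically closed field of characteristic p > 0 and let n ≥ 3. Let a, b, c ∈ k[x_0,…,x_n] be homogeneous polynomials of the same degree d+1 ≥ 1 having no common non-unit divisor, and suppose the 1-form ω = a dx_0 + b dx_1 + c dx_2 (i.e. the homogeneous polynomial 1-form with a_0 = a, a_1 = b, a_2 = c and a_i = 0 for i ≥ 3) is projective and integrable. Then a, b and c all belong to the k-subalgebra of k[x_0,…,x_n] generated by x_0, x_1, x_2 and the p-th powers x_i^p for 3 ≤ i ≤ n. -/

import Mathlib

/-!
For `l ≥ 3` we have `a_l = 0`, so the Frobenius condition for the indices `(i, j, l)` collapses to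
`a_j ∂_l a_i = a_i ∂_l a_j`. Hence `a` divides `b ∂_l a` and `c ∂_l a`; as `a, b, c` have no
common factor, `a` divides `∂_l a`, which has smaller degree, so `∂_l a = 0`, and likewise for
`b` and `c`. In characteristic `p`, `∂_l P = 0` means that every exponent of `x_l` in `P` is a
multiple of `p`.
-/

open MvPolynomial

/-- The `k`-subalgebra of `k[x_0, …, x_n]` generated by `x_0, x_1, x_2` and the `p`-th
powers `x_i^p` for `3 ≤ i ≤ n`. -/
noncomputable def xAlg (k : Type*) [CommRing k] (n p : ℕ) :
    Subalgebra k (MvPolynomial (Fin (n + 1)) k) :=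
  Algebra.adjoin k
    {P | (∃ i : Fin (n + 1), (i : ℕ) < 3 ∧ P = X i) ∨
         (∃ i : Fin (n + 1), 3 ≤ (i : ℕ) ∧ P = X i ^ p)}

theorem dvd_of_dvd_mul_right_of_dvd_mul_right {α : Type*} [CommMonoidWithZero α]
    [GCDMonoid α] {a b c g : α} (hcop : ∀ q, q ∣ a → q ∣ b → q ∣ c → IsUnit q)
    (hb : a ∣ g * b) (hc : a ∣ g * c) : a ∣ g := by
  have hrel : IsRelPrime a (gcd b c) := fun q hqa hqbc =>
    hcop q hqa (hqbc.trans (gcd_dvd_left b c)) (hqbc.trans (gcd_dvd_right b c))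
  exact hrel.dvd_of_dvd_mul_right <| (dvd_gcd hb hc).trans (gcd_mul_left' g b c).dvd

namespace MvPolynomial

variable {σ R : Type*}

theorem IsHomogeneous.eq_zero_of_dvd [CommSemiring R] {f g : MvPolynomial σ R} {m e : ℕ}
    (hf : f.IsHomogeneous m) (hg : g.IsHomogeneous e) (hlt : e < m) (hdvd : f ∣ g) :
    g = 0 := by
  classical
  obtain ⟨h, rfl⟩ := hdvd
  by_contra hne
  obtain ⟨u, hu⟩ := ne_zero_iff.mp hne
  obtain ⟨u₁, hu₁, u₂, -, rfl⟩ := Finset.mem_add.mp (support_mul f h (mem_support_iff.mpr hu))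
  have hdeg := hg hu
  rw [map_add, hf (mem_support_iff.mp hu₁)] at hdeg
  omega

theorem mul_pderiv_eq_of_integrable [CommRing R] {A : σ → MvPolynomial σ R} {i j l : σ}
    (hint : A i * (pderiv j (A l) - pderiv l (A j)) - A j * (pderiv i (A l) - pderiv l (A i)) +
      A l * (pderiv i (A j) - pderiv j (A i)) = 0)
    (hl : A l = 0) : A j * pderiv l (A i) = A i * pderiv l (A j) := by
  rw [hl] at hint
  simp only [map_zero, zero_sub, zero_mul, add_zero, mul_neg] at hint
  linear_combination hint

theorem pderiv_eq_zero_of_mul_pderiv_eq [Field R] {f g h : MvPolynomial σ R} {d : ℕ} (l : σ)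
    (hf : f.IsHomogeneous (d + 1)) (hcop : ∀ q, q ∣ f → q ∣ g → q ∣ h → IsUnit q)
    (hg : g * pderiv l f = f * pderiv l g) (hh : h * pderiv l f = f * pderiv l h) :
    pderiv l f = 0 := by
  let := UniqueFactorizationMonoid.toGCDMonoid (MvPolynomial σ R)
  refine hf.eq_zero_of_dvd hf.pderiv (by omega) ?_
  exact dvd_of_dvd_mul_right_of_dvd_mul_right hcop ⟨pderiv l g, by rw [mul_comm, hg]⟩
    ⟨pderiv l h, by rw [mul_comm, hh]⟩

theorem dvd_of_pderiv_eq_zero [CommSemiring R] [NoZeroDivisors R] (p : ℕ) [CharP R p]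
    {P : MvPolynomial σ R} {i : σ} (hP : pderiv i P = 0) {m : σ →₀ ℕ} (hm : coeff m P ≠ 0) :
    p ∣ m i := by
  classical
  obtain hmi | hmi := Nat.eq_zero_or_pos (m i)
  · simp [hmi]
  have hle : Finsupp.single i 1 ≤ m := Finsupp.single_le_iff.mpr hmi
  have hcoeff := coeff_pderiv (i := i) P (m - Finsupp.single i 1)
  rw [hP, coeff_zero, tsub_add_cancel_of_le hle, Finsupp.tsub_apply, Finsupp.single_eq_same,
    ← Nat.cast_succ, Nat.succ_eq_add_one, Nat.sub_add_cancel hmi] at hcoeff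
  exact (CharP.cast_eq_zero_iff R p _).mp ((mul_eq_zero.mp hcoeff.symm).resolve_left hm)

end MvPolynomial

theorem mem_xAlg_of_pderiv_eq_zero {k : Type*} [CommRing k] [NoZeroDivisors k] {n p : ℕ}
    [CharP k p] {P : MvPolynomial (Fin (n + 1)) k}
    (hP : ∀ i : Fin (n + 1), 3 ≤ (i : ℕ) → pderiv i P = 0) : P ∈ xAlg k n p := by
  rw [← P.support_sum_monomial_coeff]
  refine Subalgebra.sum_mem _ fun m hm => ?_
  rw [monomial_eq, ← algebraMap_eq]
  refine Subalgebra.mul_mem _ (Subalgebra.algebraMap_mem _ _) (Subalgebra.prod_mem _ fun i _ => ?_)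
  dsimp only
  rcases lt_or_ge (i : ℕ) 3 with hi | hi
  · have hX : X i ∈ xAlg k n p := Algebra.subset_adjoin (Or.inl ⟨i, hi, rfl⟩)
    exact Subalgebra.pow_mem _ hX _
  · obtain ⟨t, ht⟩ := dvd_of_pderiv_eq_zero p (hP i hi) (mem_support_iff.mp hm)
    rw [ht, pow_mul]
    have hXp : X i ^ p ∈ xAlg k n p := Algebra.subset_adjoin (Or.inr ⟨i, hi, rfl⟩)
    exact Subalgebra.pow_mem _ hXp _

theorem stmt_10_general {k : Type*} [Field k] (p : ℕ) [CharP k p]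
    (n d : ℕ)
    (a b c : MvPolynomial (Fin (n + 1)) k)
    (hha : a.IsHomogeneous (d + 1)) (hhb : b.IsHomogeneous (d + 1))
    (hhc : c.IsHomogeneous (d + 1))
    (hcop : ∀ g : MvPolynomial (Fin (n + 1)) k, g ∣ a → g ∣ b → g ∣ c → IsUnit g)
    (A : Fin (n + 1) → MvPolynomial (Fin (n + 1)) k)
    (hA : ∀ i : Fin (n + 1), A i =
      if (i : ℕ) = 0 then a else if (i : ℕ) = 1 then b else if (i : ℕ) = 2 then c else 0)
    (hint : ∀ i j l : Fin (n + 1),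
      A i * (pderiv j (A l) - pderiv l (A j)) -
        A j * (pderiv i (A l) - pderiv l (A i)) +
        A l * (pderiv i (A j) - pderiv j (A i)) = 0) :
    a ∈ xAlg k n p ∧ b ∈ xAlg k n p ∧ c ∈ xAlg k n p := by
  have hder : ∀ l : Fin (n + 1), 3 ≤ (l : ℕ) →
      pderiv l a = 0 ∧ pderiv l b = 0 ∧ pderiv l c = 0 := by
    intro l hl
    have hAl : A l = 0 := by
      rw [hA, if_neg (by omega), if_neg (by omega), if_neg (by omega)]
    have rel (i j : ℕ) (hi : i < n + 1) (hj : j < n + 1) :=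
      mul_pderiv_eq_of_integrable (hint ⟨i, hi⟩ ⟨j, hj⟩ l) hAl
    have hab := rel 0 1 (by omega) (by omega)
    have hac := rel 0 2 (by omega) (by omega)
    have hbc := rel 1 2 (by omega) (by omega)
    simp only [hA, ↓reduceIte, one_ne_zero, OfNat.ofNat_ne_zero, OfNat.ofNat_ne_one] at hab hac hbc
    exact ⟨pderiv_eq_zero_of_mul_pderiv_eq l hha hcop hab hac,
      pderiv_eq_zero_of_mul_pderiv_eq l hhb (fun q hb ha hc => hcop q ha hb hc) hab.symm hbc,
      pderiv_eq_zero_of_mul_pderiv_eq l hhc (fun q hc ha hb => hcop q ha hb hc) hac.symm hbc.symm⟩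
  exact ⟨mem_xAlg_of_pderiv_eq_zero fun l hl => (hder l hl).1,
    mem_xAlg_of_pderiv_eq_zero fun l hl => (hder l hl).2.1,
    mem_xAlg_of_pderiv_eq_zero fun l hl => (hder l hl).2.2⟩

/-- Over an algebraically closed field of characteristic `p > 0` and for
`n ≥ 3`, if `a, b, c` are homogeneous polynomials of the same degree `d + 1 ≥ 1` with no
common non-unit divisor and the `1`-form `ω = a dx_0 + b dx_1 + c dx_2` is projective and
integrable, then `a`, `b`, `c` all lie in the subalgebra generated by `x_0, x_1, x_2` and
the `p`-th powers `x_i^p`, `3 ≤ i ≤ n`. -/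
theorem stmt_10 {k : Type*} [Field k] [IsAlgClosed k] (p : ℕ) [CharP k p] (hp : 0 < p)
    (n d : ℕ) (hn : 3 ≤ n)
    (a b c : MvPolynomial (Fin (n + 1)) k)
    (hha : a.IsHomogeneous (d + 1)) (hhb : b.IsHomogeneous (d + 1))
    (hhc : c.IsHomogeneous (d + 1))
    (hcop : ∀ g : MvPolynomial (Fin (n + 1)) k, g ∣ a → g ∣ b → g ∣ c → IsUnit g)
    (A : Fin (n + 1) → MvPolynomial (Fin (n + 1)) k)
    (hA : ∀ i : Fin (n + 1), A i =
      if (i : ℕ) = 0 then a else if (i : ℕ) = 1 then b else if (i : ℕ) = 2 then c else 0)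
    (hproj : ∑ i : Fin (n + 1), X i * A i = 0)
    (hint : ∀ i j l : Fin (n + 1),
      A i * (pderiv j (A l) - pderiv l (A j)) -
        A j * (pderiv i (A l) - pderiv l (A i)) +
        A l * (pderiv i (A j) - pderiv j (A i)) = 0) :
    a ∈ xAlg k n p ∧ b ∈ xAlg k n p ∧ c ∈ xAlg k n p :=
  stmt_10_general p n d a b c hha hhb hhc hcop A hA hint
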